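/- Let (𝒳, δ) be a metric space, δ₀ > 0, n even, X_1,…,X_n ∈ 𝒳, u ∈ U, S = {i : u_i = 1} and S^c = {i : u_i = −1}. Then sup over all functions f : 𝒳 → ℝ that are 1-Lipschitz and satisfy |f(x)| ≤ δ₀ for all x ∈ 𝒳 of Σ_{i=1}^n u_i f(X_i) equals the minimum over all subsets A ⊆ S and injections π : A → S^c of [ Σ_{i ∈ A} δ(X_i, X_{π(i)}) + δ₀ · (n − 2|A|) ]. (Duality for pairwise matching with the option of leaving subjects unmatched at penalty δ₀ per unmatched subject.) -/

import Mathlib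

/-!
Weak duality is termwise: a matched pair contributes at most its distance because `f` is
1-Lipschitz, and an unmatched subject at most `δ₀` because `|f| ≤ δ₀`.

For the converse, pad a partial matching to a perfect matching `σ : S ≃ Sᶜ`, charging the
truncated cost `ρ x y = min (dist x y) (2 δ₀)` per pair, so that a pair at distance `≥ 2 δ₀`
costs exactly the penalty of leaving its two subjects unmatched. Take `σ` optimal for `ρ`.
Every simple cycle of the reduced costs `ρ(Xᵢ, X_j) - ρ(Xᵢ, X_{σ i})` is a permutation, hence
has nonnegative cost by optimality, so shortest simple-path costs are potentials `ψ` with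
`ρ(Xᵢ, X_{σ i}) + ψ (σ i) ≤ ρ(Xᵢ, X_j) + ψ j`. The `ρ`-transform `f x = min_j (ρ(x, X_j) + ψ j)`
is 1-Lipschitz, takes values in an interval of length `2 δ₀`, and after centring its imbalance
is at least the optimal cost of `σ`, which is the cost of a partial matching.
-/

open scoped Classical BigOperators

/-- The ±1 sign associated to a boolean assignment: `true ↦ 1`, `false ↦ -1`. -/
noncomputable def sgn {n : ℕ} (u : Fin n → Bool) (i : Fin n) : ℝ :=
  if u i then 1 else -1

open Finset Equiv

section Potential

variable {ι : Type*} (w : ι → ι → ℝ)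

def walkCost : List ι → ℝ
  | [] => 0
  | [_] => 0
  | a :: b :: l => w a b + walkCost (b :: l)

lemma walkCost_append_singleton (b : ι) :
    ∀ (l : List ι) (hl : l ≠ []), walkCost w (l ++ [b]) = walkCost w l + w (l.getLast hl) b
  | [a], _ => by simp [walkCost]
  | a :: c :: l, _ => by
    have ih := walkCost_append_singleton b (c :: l) (List.cons_ne_nil c l)
    have e : walkCost w (a :: c :: l ++ [b]) = w a c + walkCost w (c :: l ++ [b]) := rfl
    rw [e, ih, List.getLast_cons_cons, walkCost, add_assoc]

lemma walkCost_append_cons (a : ι) (t : List ι) :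
    ∀ s : List ι, walkCost w (s ++ a :: t) = walkCost w (s ++ [a]) + walkCost w (a :: t)
  | [] => by simp [walkCost]
  | [x] => by simp [walkCost]
  | x :: y :: s => by
    have e₁ : walkCost w (x :: y :: s ++ a :: t) = w x y + walkCost w (y :: s ++ a :: t) := rfl
    have e₂ : walkCost w (x :: y :: s ++ [a]) = w x y + walkCost w (y :: s ++ [a]) := rfl
    rw [e₁, e₂, walkCost_append_cons a t (y :: s), add_assoc]

variable {w}

lemma sum_formPerm_eq_walkCost [Fintype ι] [DecidableEq ι] (hw : ∀ a, w a a = 0) :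
    ∀ (x : ι) (l : List ι), (x :: l).Nodup →
      ∑ z, w z ((x :: l).formPerm z) = walkCost w (x :: l ++ [x])
  | x, [], _ => by simp [walkCost, hw]
  | x, y :: m, hl => by
    set a := (y :: m).getLast (List.cons_ne_nil y m)
    have hx : x ∉ y :: m := (List.nodup_cons.mp hl).1
    have hxa : x ≠ a := fun h => hx (h ▸ List.getLast_mem _)
    have hfix : (y :: m).formPerm x = x := List.formPerm_apply_of_notMem hx
    have hlast : (y :: m).formPerm a = y := List.formPerm_apply_getLast y m
    have hdiff : ∑ z, (w z ((x :: y :: m).formPerm z) - w z ((y :: m).formPerm z))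
        = (w x y - w x x) + (w a x - w a y) := by
      rw [Fintype.sum_eq_add x a hxa]
      · simp [hfix, hlast, swap_apply_left, swap_apply_right]
      · rintro z ⟨hzx, hza⟩
        have h1 : (y :: m).formPerm z ≠ x := fun h =>
          hzx ((y :: m).formPerm.injective (h.trans hfix.symm))
        have h2 : (y :: m).formPerm z ≠ y := fun h =>
          hza ((List.formPerm_eq_head_iff_eq_getLast m z y).mp h)
        simp [swap_apply_of_ne_of_ne h1 h2]
    rw [Finset.sum_sub_distrib, sum_formPerm_eq_walkCost hw y m hl.of_cons, hw] at hdiff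
    have e : walkCost w (x :: y :: m ++ [x]) = w x y + walkCost w (y :: m ++ [x]) := rfl
    rw [e, walkCost_append_singleton w x (y :: m) (List.cons_ne_nil y m)]
    rw [walkCost_append_singleton w y (y :: m) (List.cons_ne_nil y m)] at hdiff
    linarith

variable (w)

def simplePathCosts (i : ι) : Set ℝ :=
  {c | ∃ l : List ι, (i :: l).Nodup ∧ c = walkCost w (i :: l)}

variable [Fintype ι]

lemma simplePathCosts_finite (i : ι) : (simplePathCosts w i).Finite := by
  refine (Set.finite_range fun l : {l : List ι // l.Nodup} => walkCost w (i :: l.1)).subset ?_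
  rintro c ⟨l, hl, rfl⟩
  exact ⟨⟨l, hl.of_cons⟩, rfl⟩

noncomputable def pathPotential (i : ι) : ℝ := sInf (simplePathCosts w i)

lemma pathPotential_le {i : ι} {l : List ι} (hl : (i :: l).Nodup) :
    pathPotential w i ≤ walkCost w (i :: l) :=
  csInf_le (simplePathCosts_finite w i).bddBelow ⟨l, hl, rfl⟩

lemma exists_nodup_pathPotential_eq (i : ι) :
    ∃ l : List ι, (i :: l).Nodup ∧ pathPotential w i = walkCost w (i :: l) :=
  Set.Nonempty.csInf_mem (s := simplePathCosts w i) ⟨_, [], List.nodup_singleton i, rfl⟩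
    (simplePathCosts_finite w i)

variable {w}

lemma pathPotential_le_add (hw : ∀ a, w a a = 0) (hperm : ∀ σ : Perm ι, 0 ≤ ∑ z, w z (σ z))
    (i j : ι) : pathPotential w i ≤ w i j + pathPotential w j := by
  obtain ⟨l, hl, hj⟩ := exists_nodup_pathPotential_eq w j
  rw [hj]
  by_cases hi : i ∈ j :: l
  · -- Cut the path `j :: l` at `i`: the closed walk `i → j → ⋯ → i` is a simple cycle.
    obtain ⟨s, t, hst⟩ := List.append_of_mem hi
    have hnd : (i :: (s ++ t)).Nodup := List.nodup_middle.mp (hst ▸ hl)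
    have hcycle : 0 ≤ walkCost w (i :: s ++ [i]) :=
      sum_formPerm_eq_walkCost hw i s (hnd.sublist (by simp)) ▸ hperm _
    have hhead : walkCost w (i :: s ++ [i]) = w i j + walkCost w (s ++ [i]) := by
      rcases s with _ | ⟨k, s⟩ <;> obtain ⟨rfl, -⟩ := List.cons.inj hst <;> rfl
    have htail := pathPotential_le w (hnd.sublist ((List.sublist_append_right s t).cons_cons i))
    rw [hst, walkCost_append_cons]
    linarith
  · exact pathPotential_le w (List.nodup_cons.2 ⟨hi, hl⟩)

end Potential

theorem exists_potential_of_optimal_equiv {ι κ : Type*} [Fintype ι] (c : ι → κ → ℝ) (σ : ι ≃ κ)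
    (hσ : ∀ τ : ι ≃ κ, ∑ i, c i (σ i) ≤ ∑ i, c i (τ i)) :
    ∃ ψ : κ → ℝ, ∀ i j, c i (σ i) + ψ (σ i) ≤ c i j + ψ j := by
  set w : ι → ι → ℝ := fun i i' => c i (σ i') - c i (σ i)
  have hperm : ∀ π : Perm ι, 0 ≤ ∑ i, w i (π i) := fun π => by
    simpa [w, Finset.sum_sub_distrib] using hσ (π.trans σ)
  refine ⟨fun j => pathPotential w (σ.symm j), fun i j => ?_⟩
  have := pathPotential_le_add (w := w) (by simp [w]) hperm i (σ.symm j)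
  simp only [Equiv.symm_apply_apply, w, Equiv.apply_symm_apply] at this ⊢
  linarith

section TruncTransform

variable {𝒳 κ : Type*} [PseudoMetricSpace 𝒳] [Fintype κ] [Nonempty κ]

noncomputable def truncTransform (δ : ℝ) (y : κ → 𝒳) (ψ : κ → ℝ) (x : 𝒳) : ℝ :=
  univ.inf' univ_nonempty fun j => min (dist x (y j)) (2 * δ) + ψ j

variable {δ : ℝ} {y : κ → 𝒳} {ψ : κ → ℝ}

lemma truncTransform_le (x : 𝒳) (j : κ) :
    truncTransform δ y ψ x ≤ min (dist x (y j)) (2 * δ) + ψ j :=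
  inf'_le _ (mem_univ j)

lemma le_truncTransform {x : 𝒳} {a : ℝ} (h : ∀ j, a ≤ min (dist x (y j)) (2 * δ) + ψ j) :
    a ≤ truncTransform δ y ψ x :=
  le_inf' _ _ fun j _ => h j

lemma lipschitzWith_truncTransform : LipschitzWith 1 (truncTransform δ y ψ) := by
  refine LipschitzWith.of_le_add fun x x' => ?_
  obtain ⟨j, -, hj⟩ :=
    exists_mem_eq_inf' univ_nonempty fun j => min (dist x' (y j)) (2 * δ) + ψ j
  have hmin : min (dist x (y j)) (2 * δ) ≤ min (dist x' (y j)) (2 * δ) + dist x x' :=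
    ((LipschitzWith.dist_left (y j)).min_const (2 * δ)).le_add_mul x x' |>.trans_eq (by simp)
  calc truncTransform δ y ψ x ≤ min (dist x (y j)) (2 * δ) + ψ j := truncTransform_le x j
    _ ≤ truncTransform δ y ψ x' + dist x x' := by rw [truncTransform, hj]; linarith

lemma truncTransform_mem_Icc (hδ : 0 ≤ δ) (x : 𝒳) :
    truncTransform δ y ψ x ∈
      Set.Icc (univ.inf' univ_nonempty ψ) (univ.inf' univ_nonempty ψ + 2 * δ) := by
  obtain ⟨j, -, hj⟩ := exists_mem_eq_inf' univ_nonempty ψ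
  refine ⟨le_truncTransform fun k => ?_, ?_⟩
  · have := inf'_le ψ (mem_univ k)
    have : 0 ≤ min (dist x (y k)) (2 * δ) := le_min dist_nonneg (by linarith)
    linarith
  · rw [hj]
    linarith [truncTransform_le (δ := δ) (y := y) (ψ := ψ) x j,
      min_le_right (dist x (y j)) (2 * δ)]

lemma truncTransform_apply_le (hδ : 0 ≤ δ) (j : κ) : truncTransform δ y ψ (y j) ≤ ψ j := by
  simpa [min_eq_left (by linarith : (0 : ℝ) ≤ 2 * δ)] using
    truncTransform_le (δ := δ) (y := y) (ψ := ψ) (y j) j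

end TruncTransform

theorem exists_lipschitz_ge_of_optimal_equiv {𝒳 : Type*} [PseudoMetricSpace 𝒳] {δ : ℝ}
    (hδ : 0 ≤ δ) {ι κ : Type*} [Fintype ι] [Fintype κ] (x : ι → 𝒳) (y : κ → 𝒳) (σ : ι ≃ κ)
    (hσ : ∀ τ : ι ≃ κ,
      ∑ i, min (dist (x i) (y (σ i))) (2 * δ) ≤ ∑ i, min (dist (x i) (y (τ i))) (2 * δ)) :
    ∃ f : 𝒳 → ℝ, LipschitzWith 1 f ∧ (∀ z, |f z| ≤ δ) ∧
      ∑ i, min (dist (x i) (y (σ i))) (2 * δ) ≤ ∑ i, f (x i) - ∑ j, f (y j) := by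
  rcases isEmpty_or_nonempty ι with hι | hι
  · have : IsEmpty κ := σ.symm.isEmpty
    exact ⟨0, LipschitzWith.const' 0, fun _ => by simpa using hδ, by simp⟩
  have : Nonempty κ := σ.nonempty_congr.mp hι
  obtain ⟨ψ, hψ⟩ :=
    exists_potential_of_optimal_equiv (fun i j => min (dist (x i) (y j)) (2 * δ)) σ hσ
  set g := truncTransform δ y ψ
  set m := univ.inf' univ_nonempty ψ
  refine ⟨fun z => g z - (m + δ), ?_, fun z => ?_, ?_⟩
  · refine LipschitzWith.of_le_add fun a b => ?_
    have := (lipschitzWith_truncTransform (δ := δ) (y := y) (ψ := ψ)).le_add_mul a b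
    simp only [NNReal.coe_one, one_mul] at this
    linarith
  · obtain ⟨h₁, h₂⟩ := truncTransform_mem_Icc (y := y) (ψ := ψ) hδ z
    rw [abs_le]
    constructor <;> linarith
  have hx : ∀ i, min (dist (x i) (y (σ i))) (2 * δ) + ψ (σ i) ≤ g (x i) :=
    fun i => le_truncTransform (hψ i)
  have hy : ∀ j, g (y j) ≤ ψ j := truncTransform_apply_le hδ
  calc ∑ i, min (dist (x i) (y (σ i))) (2 * δ)
      = ∑ i, (min (dist (x i) (y (σ i))) (2 * δ) + ψ (σ i)) - ∑ j, ψ j := by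
        rw [sum_add_distrib, Equiv.sum_comp σ ψ]; ring
    _ ≤ ∑ i, g (x i) - ∑ j, g (y j) :=
        sub_le_sub (sum_le_sum fun i _ => hx i) (sum_le_sum fun j _ => hy j)
    _ = ∑ i, (g (x i) - (m + δ)) - ∑ j, (g (y j) - (m + δ)) := by
        simp only [sum_sub_distrib, sum_const, card_univ, Fintype.card_congr σ]; ring

section Matching

variable {𝒳 ι : Type*} [PseudoMetricSpace 𝒳] {δ : ℝ} (X : ι → 𝒳) {S T : Finset ι}

theorem sum_sub_sum_le_matching_cost [DecidableEq ι] {f : 𝒳 → ℝ} (hf : LipschitzWith 1 f)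
    (hfδ : ∀ z, |f z| ≤ δ) {A : Finset ι} {π : ι → ι} (hAS : A ⊆ S) (hπ : Set.InjOn π A)
    (hπT : ∀ i ∈ A, π i ∈ T) :
    ∑ i ∈ S, f (X i) - ∑ i ∈ T, f (X i)
      ≤ ∑ i ∈ A, dist (X i) (X (π i)) + δ * (#S + #T - 2 * #A) := by
  have hBT : A.image π ⊆ T := by simpa [Finset.image_subset_iff] using hπT
  have hmatched :
      ∑ i ∈ A, f (X i) - ∑ j ∈ A.image π, f (X j) ≤ ∑ i ∈ A, dist (X i) (X (π i)) := by
    rw [sum_image hπ, ← sum_sub_distrib]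
    refine sum_le_sum fun i _ => ?_
    have := hf.dist_le_mul (X i) (X (π i))
    rw [NNReal.coe_one, one_mul, Real.dist_eq] at this
    exact (le_abs_self _).trans this
  have hS : ∑ i ∈ S \ A, f (X i) ≤ #(S \ A) • δ :=
    sum_le_card_nsmul _ _ _ fun i _ => (abs_le.mp (hfδ (X i))).2
  have hT : #(T \ A.image π) • (-δ) ≤ ∑ j ∈ T \ A.image π, f (X j) :=
    card_nsmul_le_sum _ _ _ fun j _ => (abs_le.mp (hfδ (X j))).1
  rw [← sum_sdiff hAS, ← sum_sdiff hBT]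
  rw [nsmul_eq_mul, cast_card_sdiff hAS] at hS
  rw [nsmul_eq_mul, cast_card_sdiff hBT, card_image_of_injOn hπ] at hT
  linarith

lemma sum_min_eq_sum_filter_add (s : Finset ι) (a : ι → ℝ) (c : ℝ) :
    ∑ i ∈ s, min (a i) c = ∑ i ∈ s with a i < c, a i + #{i ∈ s | ¬ a i < c} * c := by
  rw [← sum_filter_add_sum_filter_not s (fun i => a i < c)]
  congr 1
  · exact sum_congr rfl fun i hi => min_eq_left (mem_filter.mp hi).2.le
  · rw [sum_congr rfl fun i hi => min_eq_right (not_lt.mp (mem_filter.mp hi).2), sum_const,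
      nsmul_eq_mul]

theorem exists_lipschitz_ge_matching_cost (hδ : 0 ≤ δ) (hST : #S = #T) :
    ∃ f : 𝒳 → ℝ, LipschitzWith 1 f ∧ (∀ z, |f z| ≤ δ) ∧ ∃ A ⊆ S, ∃ π : ι → ι,
      Set.InjOn π A ∧ (∀ i ∈ A, π i ∈ T) ∧
      ∑ i ∈ A, dist (X i) (X (π i)) + δ * (#S + #T - 2 * #A)
        ≤ ∑ i ∈ S, f (X i) - ∑ i ∈ T, f (X i) := by
  have : Nonempty (S ≃ T) := ⟨Fintype.equivOfCardEq (by simpa using hST)⟩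
  obtain ⟨σ, hσ⟩ :=
    Finite.exists_min fun τ : S ≃ T => ∑ i : S, min (dist (X i) (X (τ i))) (2 * δ)
  obtain ⟨f, hf, hfδ, hle⟩ :=
    exists_lipschitz_ge_of_optimal_equiv hδ (fun i : S => X i) (fun j : T => X j) σ hσ
  set π : ι → ι := fun i => if h : i ∈ S then σ ⟨i, h⟩ else i
  have hπ : ∀ i : S, π i = σ i := fun i => dif_pos i.2
  set A := {i ∈ S | dist (X i) (X (π i)) < 2 * δ}
  have hAS : A ⊆ S := filter_subset _ _
  refine ⟨f, hf, hfδ, A, hAS, π, fun a ha b hb hab => ?_, fun i hi => ?_, ?_⟩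
  · have := (hπ ⟨a, hAS ha⟩).symm.trans (hab.trans (hπ ⟨b, hAS hb⟩))
    exact congrArg Subtype.val (σ.injective (Subtype.ext this))
  · simp [hπ ⟨i, hAS hi⟩]
  have hcost : ∑ i : S, min (dist (X i) (X (σ i))) (2 * δ)
      = ∑ i ∈ A, dist (X i) (X (π i)) + δ * (#S + #T - 2 * #A) := by
    have hcard : (#A : ℝ) + #{i ∈ S | ¬ dist (X i) (X (π i)) < 2 * δ} = #S := by
      exact_mod_cast card_filter_add_card_filter_not _
    simp_rw [← hπ]
    rw [sum_coe_sort S (fun i => min (dist (X i) (X (π i))) (2 * δ)),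
      sum_min_eq_sum_filter_add, ← hST]
    linear_combination (2 * δ) * hcard
  rw [← hcost, ← sum_coe_sort S (fun i => f (X i)), ← sum_coe_sort T (fun i => f (X i))]
  exact hle

end Matching

theorem csSup_eq_csInf_of_forall_le_of_exists_le {α : Type*} [ConditionallyCompleteLattice α]
    {s t : Set α} (hle : ∀ a ∈ s, ∀ b ∈ t, a ≤ b) (hex : ∃ a ∈ s, ∃ b ∈ t, b ≤ a) :
    sSup s = sInf t := by
  obtain ⟨a, ha, b, hb, hba⟩ := hex
  refine le_antisymm (csSup_le ⟨a, ha⟩ fun a' ha' => le_csInf ⟨b, hb⟩ (hle a' ha')) ?_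
  calc sInf t ≤ b := csInf_le ⟨a, fun b' hb' => hle a ha b' hb'⟩ hb
    _ ≤ a := hba
    _ ≤ sSup s := le_csSup ⟨b, fun a' ha' => hle a' ha' b hb⟩ ha

section Sign

variable {n : ℕ} (u : Fin n → Bool)

lemma sgn_eq_one_iff {i : Fin n} : sgn u i = 1 ↔ u i = true := by
  unfold sgn
  split_ifs with h <;> norm_num [h]

lemma sgn_eq_neg_one_iff {i : Fin n} : sgn u i = -1 ↔ u i = false := by
  unfold sgn
  split_ifs with h <;> norm_num [h]

lemma sum_sgn_mul (g : Fin n → ℝ) :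
    ∑ i, sgn u i * g i = ∑ i with u i = true, g i - ∑ i with u i = false, g i := by
  rw [← sum_filter_add_sum_filter_not univ (fun i => u i = true), sub_eq_add_neg,
    ← sum_neg_distrib]
  congr 1 <;> refine sum_congr (by ext; simp) fun i hi => ?_ <;> simp_all [sgn]

end Sign

theorem stmt8_general {𝒳 : Type*} [MetricSpace 𝒳] (δ₀ : ℝ) (hδ₀ : 0 < δ₀)
    (n : ℕ) (X : Fin n → 𝒳)
    (u : Fin n → Bool) (hu : ∑ i, sgn u i = 0) :
    sSup {s : ℝ | ∃ f : 𝒳 → ℝ, LipschitzWith 1 f ∧ (∀ x, |f x| ≤ δ₀) ∧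
        s = ∑ i, sgn u i * f (X i)}
      = sInf {c : ℝ | ∃ (A : Finset (Fin n)) (π : Fin n → Fin n),
          (∀ i ∈ A, sgn u i = 1) ∧
          Set.InjOn π ↑A ∧
          (∀ i ∈ A, sgn u (π i) = -1) ∧
          c = (∑ i ∈ A, dist (X i) (X (π i))) + δ₀ * ((n : ℝ) - 2 * A.card)} := by
  set S : Finset (Fin n) := {i | u i = true}
  set T : Finset (Fin n) := {i | u i = false}
  have hST : #S = #T := by
    have := sum_sgn_mul u 1
    simp only [mul_one, hu, Pi.one_apply, sum_const, nsmul_one] at this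
    exact_mod_cast (sub_eq_zero.mp this.symm)
  have hn : (#S + #T : ℝ) = n := by
    have := card_filter_add_card_filter_not (s := univ) (fun i : Fin n => u i = true)
    simp only [Bool.not_eq_true, card_univ, Fintype.card_fin] at this
    exact_mod_cast this
  apply csSup_eq_csInf_of_forall_le_of_exists_le
  · rintro _ ⟨f, hf, hfδ, rfl⟩ _ ⟨A, π, hA, hπ, hπT, rfl⟩
    rw [sum_sgn_mul, ← hn]
    exact sum_sub_sum_le_matching_cost X hf hfδ
      (fun i hi => by simpa [S, sgn_eq_one_iff] using hA i hi) hπ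
      (fun i hi => by simpa [T, sgn_eq_neg_one_iff] using hπT i hi)
  · obtain ⟨f, hf, hfδ, A, hAS, π, hπ, hπT, hle⟩ :=
      exists_lipschitz_ge_matching_cost X hδ₀.le hST
    refine ⟨_, ⟨f, hf, hfδ, rfl⟩, _, ⟨A, π, fun i hi => ?_, hπ, fun i hi => ?_, rfl⟩, ?_⟩
    · exact (sgn_eq_one_iff u).2 (mem_filter.1 (hAS hi)).2
    · exact (sgn_eq_neg_one_iff u).2 (mem_filter.1 (hπT i hi)).2
    · rwa [sum_sgn_mul, ← hn]

/-- Duality for pairwise matching with the option of leaving subjects unmatched at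
penalty `δ₀` each: for a fixed balanced assignment `u ∈ U`, the worst-case imbalance
over functions that are 1-Lipschitz and bounded by `δ₀` equals the minimum over
partial matchings `π : A → Sᶜ` (with `A ⊆ S`) of the matching cost plus
`δ₀ · (n − 2|A|)`. -/
theorem stmt8 {𝒳 : Type*} [MetricSpace 𝒳] (δ₀ : ℝ) (hδ₀ : 0 < δ₀)
    (n : ℕ) (hne : Even n) (X : Fin n → 𝒳)
    (u : Fin n → Bool) (hu : ∑ i, sgn u i = 0) :
    sSup {s : ℝ | ∃ f : 𝒳 → ℝ, LipschitzWith 1 f ∧ (∀ x, |f x| ≤ δ₀) ∧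
        s = ∑ i, sgn u i * f (X i)}
      = sInf {c : ℝ | ∃ (A : Finset (Fin n)) (π : Fin n → Fin n),
          (∀ i ∈ A, sgn u i = 1) ∧
          Set.InjOn π ↑A ∧
          (∀ i ∈ A, sgn u (π i) = -1) ∧
          c = (∑ i ∈ A, dist (X i) (X (π i))) + δ₀ * ((n : ℝ) - 2 * A.card)} :=
  stmt8_general δ₀ hδ₀ n X u hu
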